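/- (Free factorization of 𝒜_n.) For each n ≥ 2, the algebra 𝒜_n is the free product (coproduct of ℚ-algebras) of the free Laurent polynomial algebra ℚ[F_n] and 𝒬_n, with respect to the maps c_i ↦ x_{i,i⁻} and the inclusion 𝒬_n ⊆ 𝒜_n. Concretely: for every ℚ-algebra B, every n-tuple (b₁,…,b_n) of units of B, and every ℚ-algebra homomorphism v: 𝒬_n → B, there exists a unique ℚ-algebra homomorphism h: 𝒜_n → B such that h(x_{i,i⁻}) = b_i for all i ∈ [n] and h(q) = v(q) for all q ∈ 𝒬_n. -/

import Mathlib

open scoped Classical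

noncomputable section

namespace NCPolygon

/-- Cyclic successor on `Fin n` (the vertices of the `n`-gon in cyclic order). -/
def csucc {n : ℕ} (i : Fin n) : Fin n :=
  ⟨(i.1 + 1) % n, Nat.mod_lt _ (Nat.lt_of_le_of_lt (Nat.zero_le _) i.isLt)⟩

/-- Cyclic predecessor on `Fin n`. -/
def cpred {n : ℕ} (i : Fin n) : Fin n :=
  ⟨(i.1 + (n - 1)) % n, Nat.mod_lt _ (Nat.lt_of_le_of_lt (Nat.zero_le _) i.isLt)⟩

/-- A list of elements of `Fin n` is *cyclic* if its entries are distinct and some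
cyclic rotation of it is strictly increasing. -/
def IsCyclicSeq {n : ℕ} (l : List (Fin n)) : Prop :=
  l.Nodup ∧ ∃ k : ℕ, (l.rotate k).Pairwise (· < ·)

/-- The pair `(i,k)` crosses `(j,l)` iff `(i,j,k,l)` is cyclic. -/
def Crosses {n : ℕ} (p q : Fin n × Fin n) : Prop :=
  IsCyclicSeq [p.1, q.1, p.2, q.2]

def NonCrossing {n : ℕ} (Δ : Set (Fin n × Fin n)) : Prop :=
  (∀ p ∈ Δ, p.1 ≠ p.2) ∧ ∀ p ∈ Δ, ∀ q ∈ Δ, ¬ Crosses p q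

/-- A triangulation of the `n`-gon: a maximal crossing-free set of (directed) chords. -/
def IsTriangulation {n : ℕ} (Δ : Set (Fin n × Fin n)) : Prop :=
  NonCrossing Δ ∧ ∀ Δ' : Set (Fin n × Fin n), NonCrossing Δ' → Δ ⊆ Δ' → Δ' = Δ

/-! ### The noncommutative polygon algebra `𝒜_n` -/

abbrev OffD (n : ℕ) := {p : Fin n × Fin n // p.1 ≠ p.2}

abbrev AGen (n : ℕ) := OffD n ⊕ OffD n

def xF {n : ℕ} (i j : Fin n) : FreeAlgebra ℚ (AGen n) :=
  if h : i ≠ j then FreeAlgebra.ι ℚ (Sum.inl ⟨(i, j), h⟩) else 1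

def xiF {n : ℕ} (i j : Fin n) : FreeAlgebra ℚ (AGen n) :=
  if h : i ≠ j then FreeAlgebra.ι ℚ (Sum.inr ⟨(i, j), h⟩) else 1

/-- The defining relations of `𝒜_n`: invertibility, triangle, and exchange relations. -/
inductive ARel (n : ℕ) : FreeAlgebra ℚ (AGen n) → FreeAlgebra ℚ (AGen n) → Prop
  | mul_inv {i j : Fin n} (h : i ≠ j) : ARel n (xF i j * xiF i j) 1
  | inv_mul {i j : Fin n} (h : i ≠ j) : ARel n (xiF i j * xF i j) 1
  | triangle {i j k : Fin n} (hij : i ≠ j) (hik : i ≠ k) (hjk : j ≠ k) :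
      ARel n (xF i j * xiF k j * xF k i) (xF i k * xiF j k * xF j i)
  | exchange {i j k l : Fin n} (h : IsCyclicSeq [i, j, k, l]) :
      ARel n (xF j l) (xF j k * xiF i k * xF i l + xF j i * xiF k i * xF k l)

/-- The noncommutative `n`-gon algebra `𝒜_n`. -/
abbrev NCPoly (n : ℕ) := RingQuot (ARel n)

/-- The generator `x_{ij} ∈ 𝒜_n` (junk value `1` when `i = j`). -/
def X {n : ℕ} (i j : Fin n) : NCPoly n :=
  RingQuot.mkAlgHom ℚ (ARel n) (xF i j)

/-- The generator `x_{ij}⁻¹ ∈ 𝒜_n`. -/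
def Xinv {n : ℕ} (i j : Fin n) : NCPoly n :=
  RingQuot.mkAlgHom ℚ (ARel n) (xiF i j)

/-- The noncommutative angle `T_i^{jk} = x_{ji}⁻¹ x_{jk} x_{ik}⁻¹ ∈ 𝒜_n`. -/
def Tang {n : ℕ} (i j k : Fin n) : NCPoly n := Xinv j i * X j k * Xinv i k

/-! ### Triangle groups -/

def tF {n : ℕ} (Δ : Set (Fin n × Fin n)) (i j : Fin n) : FreeGroup Δ :=
  if h : (i, j) ∈ Δ then FreeGroup.of (⟨(i, j), h⟩ : Δ) else 1

/-- The triangle relations of the triangle group `𝕋_Δ`. -/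
def triRels {n : ℕ} (Δ : Set (Fin n × Fin n)) : Set (FreeGroup Δ) :=
  { w | ∃ i j k : Fin n, i ≠ j ∧ i ≠ k ∧ j ≠ k ∧
      (i, j) ∈ Δ ∧ (j, i) ∈ Δ ∧ (i, k) ∈ Δ ∧ (k, i) ∈ Δ ∧ (j, k) ∈ Δ ∧ (k, j) ∈ Δ ∧
      w = tF Δ i j * (tF Δ k j)⁻¹ * tF Δ k i *
        (tF Δ i k * (tF Δ j k)⁻¹ * tF Δ j i)⁻¹ }

/-- The triangle group `𝕋_Δ` of a triangulation `Δ`. -/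
abbrev TriGroup {n : ℕ} (Δ : Set (Fin n × Fin n)) := PresentedGroup (triRels Δ)

/-- The generator `t_{ij} ∈ 𝕋_Δ` (junk value `1` when `(i,j) ∉ Δ`). -/
def tG {n : ℕ} (Δ : Set (Fin n × Fin n)) (i j : Fin n) : TriGroup Δ :=
  if h : (i, j) ∈ Δ then PresentedGroup.of (rels := triRels Δ) ⟨(i, j), h⟩ else 1

/-! ### The big triangle group `𝕋_n` -/

def btF {n : ℕ} (i j : Fin n) : FreeGroup (OffD n) :=
  if h : i ≠ j then FreeGroup.of (⟨(i, j), h⟩ : OffD n) else 1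

def bigRels (n : ℕ) : Set (FreeGroup (OffD n)) :=
  { w | ∃ i j k : Fin n, i ≠ j ∧ i ≠ k ∧ j ≠ k ∧
      w = btF i j * (btF k j)⁻¹ * btF k i * (btF i k * (btF j k)⁻¹ * btF j i)⁻¹ }

/-- The big triangle group `𝕋_n`. -/
abbrev BigTriGroup (n : ℕ) := PresentedGroup (bigRels n)

/-- The generator `t_{ij} ∈ 𝕋_n`. -/
def bigT {n : ℕ} (i j : Fin n) : BigTriGroup n :=
  if h : i ≠ j then PresentedGroup.of (rels := bigRels n) ⟨(i, j), h⟩ else 1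

/-! ### Distinguished subalgebras and subgroups -/

/-- `𝒜_Δ`: the subalgebra of `𝒜_n` generated by all `x_{ij}` together with the
`x_{ij}⁻¹` for `(i,j) ∈ Δ`. -/
def ADelta (n : ℕ) (Δ : Set (Fin n × Fin n)) : Subalgebra ℚ (NCPoly n) :=
  Algebra.adjoin ℚ
    ({a | ∃ i j : Fin n, i ≠ j ∧ a = X i j} ∪ {a | ∃ p ∈ Δ, a = Xinv p.1 p.2})

/-- `𝒬_n`: the subalgebra of `𝒜_n` generated by the `y_{ij}^k = x_{ki}⁻¹ x_{kj}`. -/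
def Qn (n : ℕ) : Subalgebra ℚ (NCPoly n) :=
  Algebra.adjoin ℚ
    {a : NCPoly n | ∃ i j k : Fin n, i ≠ j ∧ i ≠ k ∧ j ≠ k ∧ a = Xinv k i * X k j}

/-- `𝕌_Δ`: the subgroup of `𝕋_Δ` generated by the `u_{ij}^k = t_{ki}⁻¹ t_{kj}`. -/
def UDelta {n : ℕ} (Δ : Set (Fin n × Fin n)) : Subgroup (TriGroup Δ) :=
  Subgroup.closure
    {g | ∃ i j k : Fin n, (k, i) ∈ Δ ∧ (k, j) ∈ Δ ∧ g = (tG Δ k i)⁻¹ * tG Δ k j}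


/-!
Since `x_{ij} = x_{i,i⁻} y^i_{i⁻ j}` and `x_{ij}⁻¹ = y^i_{j i⁻} x_{i,i⁻}⁻¹`, the algebra `𝒜_n` is
generated by the `x_{i,i⁻}^{±1}` and `𝒬_n`; this gives uniqueness. For existence send
`x_{ij} ↦ b_i v(y^i_{i⁻ j})` and `x_{ij}⁻¹ ↦ v(y^i_{j i⁻}) b_i⁻¹`. Both sides of a triangle or
exchange relation have the form `x_{a,a⁻} q` with `q ∈ 𝒬_n`, e.g.
`x_{ab} x_{cb}⁻¹ x_{cd} = x_{a,a⁻} y^a_{a⁻ b} y^c_{bd}`, and are sent to `b_a v(q)`. As `x_{a,a⁻}`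
is invertible, each such relation is an identity in `𝒬_n`, which `v` preserves.
-/

section Generators

variable {n : ℕ}

theorem X_mul_Xinv {i j : Fin n} (h : i ≠ j) : X i j * Xinv i j = 1 := by
  rw [X, Xinv, ← map_mul, RingQuot.mkAlgHom_rel ℚ (ARel.mul_inv h), map_one]

theorem Xinv_mul_X {i j : Fin n} (h : i ≠ j) : Xinv i j * X i j = 1 := by
  rw [X, Xinv, ← map_mul, RingQuot.mkAlgHom_rel ℚ (ARel.inv_mul h), map_one]

theorem xF_of_ne {i j : Fin n} (h : i ≠ j) : xF i j = FreeAlgebra.ι ℚ (Sum.inl ⟨(i, j), h⟩) :=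
  dif_pos h

theorem xiF_of_ne {i j : Fin n} (h : i ≠ j) :
    xiF i j = FreeAlgebra.ι ℚ (Sum.inr ⟨(i, j), h⟩) :=
  dif_pos h

theorem isUnit_X {i j : Fin n} (h : i ≠ j) : IsUnit (X i j) :=
  ⟨⟨X i j, Xinv i j, X_mul_Xinv h, Xinv_mul_X h⟩, rfl⟩

theorem ne_cpred (hn : 2 ≤ n) (i : Fin n) : i ≠ cpred i := by
  intro h
  have hv : i.1 = (i.1 + (n - 1)) % n := congrArg Fin.val h
  rcases Nat.lt_or_ge (i.1 + (n - 1)) n with hlt | hge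
  · rw [Nat.mod_eq_of_lt hlt] at hv
    omega
  · rw [Nat.mod_eq_sub_mod hge, Nat.mod_eq_of_lt (by omega)] at hv
    omega

theorem Xinv_mul_X_mem_Qn {i j k : Fin n} (hij : i ≠ j) (hik : i ≠ k) :
    Xinv i j * X i k ∈ Qn n := by
  obtain rfl | hjk := eq_or_ne j k
  · rw [Xinv_mul_X hij]
    exact one_mem _
  · exact Algebra.subset_adjoin ⟨j, k, i, hjk, hij.symm, hik.symm, rfl⟩

/-- The paper's `y^i_{jk}`; unlike the generators of `Qn`, it allows `j = k`. -/
def yQ {i j k : Fin n} (hij : i ≠ j) (hik : i ≠ k) : Qn n :=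
  ⟨Xinv i j * X i k, Xinv_mul_X_mem_Qn hij hik⟩

@[simp]
theorem coe_yQ {i j k : Fin n} (hij : i ≠ j) (hik : i ≠ k) :
    (yQ hij hik : NCPoly n) = Xinv i j * X i k :=
  rfl

theorem yQ_self {i j : Fin n} (hij : i ≠ j) : yQ hij hij = 1 :=
  Subtype.ext (Xinv_mul_X hij)

theorem yQ_mul_yQ {i j k l : Fin n} (hij : i ≠ j) (hik : i ≠ k) (hil : i ≠ l) :
    yQ hij hik * yQ hik hil = yQ hij hil := by
  apply Subtype.ext
  rw [Subalgebra.coe_mul, coe_yQ, coe_yQ, coe_yQ, mul_assoc, ← mul_assoc (X i k),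
    X_mul_Xinv hik, one_mul]

theorem X_eq_X_cpred_mul_yQ (hn : 2 ≤ n) {i j : Fin n} (hij : i ≠ j) :
    X i j = X i (cpred i) * yQ (ne_cpred hn i) hij := by
  rw [coe_yQ, ← mul_assoc, X_mul_Xinv (ne_cpred hn i), one_mul]

theorem Xinv_eq_yQ_mul_Xinv_cpred (hn : 2 ≤ n) {i j : Fin n} (hij : i ≠ j) :
    Xinv i j = yQ hij (ne_cpred hn i) * Xinv i (cpred i) := by
  rw [coe_yQ, mul_assoc, X_mul_Xinv (ne_cpred hn i), mul_one]

theorem algHom_ext_of_X_cpred (hn : 2 ≤ n) {B : Type*} [Ring B] [Algebra ℚ B]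
    {g g' : NCPoly n →ₐ[ℚ] B} (hX : ∀ i, g (X i (cpred i)) = g' (X i (cpred i)))
    (hQ : ∀ q : Qn n, g q = g' q) : g = g' := by
  have hXinv (i : Fin n) : g (Xinv i (cpred i)) = g' (Xinv i (cpred i)) :=
    left_inv_eq_right_inv (by rw [← map_mul, Xinv_mul_X (ne_cpred hn i), map_one])
      (by rw [hX, ← map_mul, X_mul_Xinv (ne_cpred hn i), map_one])
  refine RingQuot.ringQuot_ext' ℚ g g' (FreeAlgebra.hom_ext (funext ?_))
  rintro (⟨⟨i, j⟩, hij⟩ | ⟨⟨i, j⟩, hij⟩)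
  · simp only [Function.comp_apply, AlgHom.comp_apply, ← xF_of_ne hij]
    change g (X i j) = g' (X i j)
    rw [X_eq_X_cpred_mul_yQ hn hij, map_mul, map_mul, hX, hQ]
  · simp only [Function.comp_apply, AlgHom.comp_apply, ← xiF_of_ne hij]
    change g (Xinv i j) = g' (Xinv i j)
    rw [Xinv_eq_yQ_mul_Xinv_cpred hn hij, map_mul, map_mul, hXinv, hQ]

end Generators

section Lift

variable {n : ℕ} {B : Type*} [Ring B] [Algebra ℚ B]
variable (hn : 2 ≤ n) (u : Fin n → Bˣ) (v : Qn n →ₐ[ℚ] B)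

def liftFree : FreeAlgebra ℚ (AGen n) →ₐ[ℚ] B :=
  FreeAlgebra.lift ℚ <| Sum.elim
    (fun p => u p.1.1 * v (yQ (ne_cpred hn p.1.1) p.2))
    (fun p => v (yQ p.2 (ne_cpred hn p.1.1)) * ↑(u p.1.1)⁻¹)

theorem liftFree_xF {i j : Fin n} (hij : i ≠ j) :
    liftFree hn u v (xF i j) = u i * v (yQ (ne_cpred hn i) hij) := by
  rw [xF_of_ne hij]
  exact FreeAlgebra.lift_ι_apply _ _

theorem liftFree_xiF {i j : Fin n} (hij : i ≠ j) :
    liftFree hn u v (xiF i j) = v (yQ hij (ne_cpred hn i)) * ↑(u i)⁻¹ := by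
  rw [xiF_of_ne hij]
  exact FreeAlgebra.lift_ι_apply _ _

theorem liftFree_xiF_mul_xF {i j k : Fin n} (hij : i ≠ j) (hik : i ≠ k) :
    liftFree hn u v (xiF i j * xF i k) = v (yQ hij hik) := by
  rw [map_mul, liftFree_xiF hn u v hij, liftFree_xF hn u v hik, mul_assoc,
    Units.inv_mul_cancel_left, ← map_mul, yQ_mul_yQ]

def FactorsAt (a : Fin n) (x : FreeAlgebra ℚ (AGen n)) : Prop :=
  ∃ q : Qn n, RingQuot.mkAlgHom ℚ (ARel n) x = X a (cpred a) * q ∧ liftFree hn u v x = u a * v q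

variable {hn u v}

theorem FactorsAt.add {a : Fin n} {x y : FreeAlgebra ℚ (AGen n)} (hx : FactorsAt hn u v a x)
    (hy : FactorsAt hn u v a y) : FactorsAt hn u v a (x + y) := by
  obtain ⟨q, hxq, hfx⟩ := hx
  obtain ⟨q', hyq, hfy⟩ := hy
  exact ⟨q + q', by rw [map_add, hxq, hyq, Subalgebra.coe_add, mul_add],
    by rw [map_add, hfx, hfy, map_add, mul_add]⟩

theorem FactorsAt.liftFree_eq {a : Fin n} {x y : FreeAlgebra ℚ (AGen n)}
    (hx : FactorsAt hn u v a x) (hy : FactorsAt hn u v a y)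
    (hxy : RingQuot.mkAlgHom ℚ (ARel n) x = RingQuot.mkAlgHom ℚ (ARel n) y) :
    liftFree hn u v x = liftFree hn u v y := by
  obtain ⟨q, hxq, hfx⟩ := hx
  obtain ⟨q', hyq, hfy⟩ := hy
  have hqq' : q = q' :=
    Subtype.ext ((isUnit_X (ne_cpred hn a)).mul_left_cancel (hxq ▸ hyq ▸ hxy))
  rw [hfx, hfy, hqq']

theorem factorsAt_xF {a b : Fin n} (hab : a ≠ b) : FactorsAt hn u v a (xF a b) :=
  ⟨yQ (ne_cpred hn a) hab, X_eq_X_cpred_mul_yQ hn hab, liftFree_xF hn u v hab⟩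

theorem factorsAt_xF_mul_xiF_mul_xF {a b c d : Fin n} (hab : a ≠ b) (hcb : c ≠ b) (hcd : c ≠ d) :
    FactorsAt hn u v a (xF a b * (xiF c b * xF c d)) := by
  refine ⟨yQ (ne_cpred hn a) hab * yQ hcb hcd, ?_, ?_⟩
  · rw [map_mul, map_mul]
    change X a b * (Xinv c b * X c d) = _
    rw [Subalgebra.coe_mul, X_eq_X_cpred_mul_yQ hn hab, mul_assoc]
    rfl
  · rw [map_mul, liftFree_xF hn u v hab, liftFree_xiF_mul_xF hn u v hcb hcd, map_mul, mul_assoc]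

variable (hn u v)

theorem liftFree_eq_of_rel {x y : FreeAlgebra ℚ (AGen n)} (h : ARel n x y) :
    liftFree hn u v x = liftFree hn u v y := by
  have hmk := RingQuot.mkAlgHom_rel ℚ h
  induction h with
  | mul_inv hij =>
    rw [map_mul, liftFree_xF hn u v hij, liftFree_xiF hn u v hij, mul_assoc, ← mul_assoc (v _),
      ← map_mul, yQ_mul_yQ, yQ_self, map_one, one_mul, Units.mul_inv, map_one]
  | inv_mul hij => rw [liftFree_xiF_mul_xF hn u v hij hij, yQ_self, map_one, map_one]
  | triangle hij hik hjk =>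
    simp only [mul_assoc] at hmk ⊢
    exact (factorsAt_xF_mul_xiF_mul_xF hij hjk.symm hik.symm).liftFree_eq
      (factorsAt_xF_mul_xiF_mul_xF hik hjk hij.symm) hmk
  | exchange h =>
    obtain ⟨⟨hij, hik, hil⟩, ⟨hjk, hjl⟩, hkl⟩ := by simpa using h.1
    simp only [mul_assoc] at hmk ⊢
    exact (factorsAt_xF hjl).liftFree_eq ((factorsAt_xF_mul_xiF_mul_xF hjk hik hil).add
      (factorsAt_xF_mul_xiF_mul_xF (Ne.symm hij) (Ne.symm hik) hkl)) hmk

def lift : NCPoly n →ₐ[ℚ] B :=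
  RingQuot.liftAlgHom ℚ ⟨liftFree hn u v, fun _ _ h => liftFree_eq_of_rel hn u v h⟩

theorem lift_mk (x : FreeAlgebra ℚ (AGen n)) :
    lift hn u v (RingQuot.mkAlgHom ℚ (ARel n) x) = liftFree hn u v x :=
  RingQuot.liftAlgHom_mkAlgHom_apply ℚ _ _ x

theorem lift_X {i j : Fin n} (hij : i ≠ j) :
    lift hn u v (X i j) = u i * v (yQ (ne_cpred hn i) hij) :=
  (lift_mk hn u v _).trans (liftFree_xF hn u v hij)

theorem lift_X_cpred (i : Fin n) : lift hn u v (X i (cpred i)) = u i := by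
  rw [lift_X hn u v (ne_cpred hn i), yQ_self, map_one, mul_one]

theorem lift_coe_Qn (q : Qn n) : lift hn u v q = v q := by
  suffices (lift hn u v).comp (Qn n).val = v from AlgHom.congr_fun this q
  refine AlgHom.adjoin_ext ?_
  rintro _ ⟨i, j, k, -, hik, hjk, rfl⟩
  change lift hn u v (Xinv k i * X k j) = v (yQ hik.symm hjk.symm)
  rw [Xinv, X, ← map_mul, lift_mk, liftFree_xiF_mul_xF]

end Lift

universe u

/-- **Free factorization of `𝒜_n`.** `𝒜_n` is the free product of the free
Laurent polynomial algebra on `c₁, …, c_n` (with `c_i ↦ x_{i,i⁻}`) and `𝒬_n`: for any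
algebra `B`, any units `b₁, …, b_n` of `B` and any homomorphism `v : 𝒬_n → B` there is a
unique algebra homomorphism `h : 𝒜_n → B` with `h(x_{i,i⁻}) = b_i` and `h|_{𝒬_n} = v`. -/
theorem free_factorization (n : ℕ) (hn : 2 ≤ n) (B : Type u) [Ring B] [Algebra ℚ B]
    (b : Fin n → B) (hb : ∀ i, IsUnit (b i)) (v : Qn n →ₐ[ℚ] B) :
    ∃! h : NCPoly n →ₐ[ℚ] B,
      (∀ i : Fin n, h (X i (cpred i)) = b i) ∧ ∀ q : Qn n, h ↑q = v q := by
  let u (i : Fin n) : Bˣ := (hb i).unit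
  refine ⟨lift hn u v, ⟨lift_X_cpred hn u v, lift_coe_Qn hn u v⟩, ?_⟩
  rintro g ⟨hgX, hgQ⟩
  refine algHom_ext_of_X_cpred hn (fun i => ?_) (fun q => ?_)
  · rw [hgX, lift_X_cpred]
    rfl
  · rw [hgQ, lift_coe_Qn]

end NCPolygon
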